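/- arXiv:2603.23664 — 2 statements merged into one kernel-verified Lean document; each statement's English description precedes it below -/
import Mathlib

section
/- With notation as in the Mindlin–Reissner setting, the vector τ₃ = (−k_x/k, k_y/k, 0)ᵀ is an eigenvector of the 3×3 dispersion matrix B_b with eigenvalue f(k,ω) = (ρh³/12)ω² − D(1−ν)/2·k² − b²κhG. -/
/-!
Applied to `(-k_x, k_y)`, the Poisson coupling `-D(1+ν)/2·k_x k_y` of the bending block removes
the part `D(1+ν)/2` of the full-stiffness diagonal terms, leaving multiplication by
`a - D(1-ν)/2·(k_x² + k_y²)`; the coupling row `i b κ h G (k_y, k_x, ·)` is orthogonal to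
`(-k_x, k_y, 0)`.
-/

open Matrix Complex

theorem mulVec_shearMode_eq_smul {K : Type*} [Field K] [NeZero (2 : K)]
    (a D ν p q r s d x y k : K) (hk : k ^ 2 = x ^ 2 + y ^ 2) (hrs : r * x = s * y) :
    !![a - D * ((1 - ν) / 2 * x ^ 2 + y ^ 2), -(D * (1 + ν) / 2) * x * y, p;
       -(D * (1 + ν) / 2) * x * y, a - D * ((1 - ν) / 2 * y ^ 2 + x ^ 2), q;
       r, s, d] *ᵥ ![-(x / k), y / k, 0]
      = (a - D * (1 - ν) / 2 * k ^ 2) • ![-(x / k), y / k, 0] := by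
  simp only [cons_mulVec, empty_mulVec, vec3_dotProduct', smul_vec3, smul_eq_mul]
  refine vec3_eq ?_ ?_ ?_
  · rw [hk]; field_simp; ring
  · rw [hk]; field_simp; ring
  · linear_combination -hrs / k

theorem mindlin_reissner_tau3_eigenvector_general
    (ρ h D ν κ G b ω kx ky k : ℝ)
    (hkdef : k = Real.sqrt (kx ^ 2 + ky ^ 2)) :
    (!![(((ρ * h ^ 3 / 12) * ω ^ 2 - κ * h * G * b ^ 2
            - D * ((1 - ν) / 2 * kx ^ 2 + ky ^ 2) : ℝ) : ℂ),
        ((-(D * (1 + ν) / 2) * kx * ky : ℝ) : ℂ),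
        -Complex.I * (b * κ * h * G * ky : ℝ);
        ((-(D * (1 + ν) / 2) * kx * ky : ℝ) : ℂ),
        (((ρ * h ^ 3 / 12) * ω ^ 2 - κ * h * G * b ^ 2
            - D * ((1 - ν) / 2 * ky ^ 2 + kx ^ 2) : ℝ) : ℂ),
        -Complex.I * (b * κ * h * G * kx : ℝ);
        Complex.I * (b * κ * h * G * ky : ℝ),
        Complex.I * (b * κ * h * G * kx : ℝ),
        ((h * (ρ * ω ^ 2 - κ * G * k ^ 2) : ℝ) : ℂ)] : Matrix (Fin 3) (Fin 3) ℂ)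
      *ᵥ ![((-(kx / k) : ℝ) : ℂ), ((ky / k : ℝ) : ℂ), 0]
    = (((ρ * h ^ 3 / 12) * ω ^ 2 - D * (1 - ν) / 2 * k ^ 2
          - b ^ 2 * κ * h * G : ℝ) : ℂ)
        • ![((-(kx / k) : ℝ) : ℂ), ((ky / k : ℝ) : ℂ), 0] := by
  have hk : k ^ 2 = kx ^ 2 + ky ^ 2 := by rw [hkdef, Real.sq_sqrt (by positivity)]
  rw [show ρ * h ^ 3 / 12 * ω ^ 2 - D * (1 - ν) / 2 * k ^ 2 - b ^ 2 * κ * h * G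
      = ρ * h ^ 3 / 12 * ω ^ 2 - κ * h * G * b ^ 2 - D * (1 - ν) / 2 * k ^ 2 by ring]
  push_cast
  exact mulVec_shearMode_eq_smul _ _ _ _ _ _ _ _ _ _ _ (by exact_mod_cast hk) (by ring)

/-- τ₃ = (−k_x/k, k_y/k, 0)ᵀ is an eigenvector of the Mindlin–Reissner dispersion
matrix B_b with eigenvalue f(k,ω) = (ρh³/12)ω² − D(1−ν)/2·k² − b²κhG. -/
theorem mindlin_reissner_tau3_eigenvector
    (ρ h D ν κ G b ω kx ky k : ℝ)
    (hk : 0 < kx ^ 2 + ky ^ 2) (hkdef : k = Real.sqrt (kx ^ 2 + ky ^ 2)) :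
    (!![(((ρ * h ^ 3 / 12) * ω ^ 2 - κ * h * G * b ^ 2
            - D * ((1 - ν) / 2 * kx ^ 2 + ky ^ 2) : ℝ) : ℂ),
        ((-(D * (1 + ν) / 2) * kx * ky : ℝ) : ℂ),
        -Complex.I * (b * κ * h * G * ky : ℝ);
        ((-(D * (1 + ν) / 2) * kx * ky : ℝ) : ℂ),
        (((ρ * h ^ 3 / 12) * ω ^ 2 - κ * h * G * b ^ 2
            - D * ((1 - ν) / 2 * ky ^ 2 + kx ^ 2) : ℝ) : ℂ),
        -Complex.I * (b * κ * h * G * kx : ℝ);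
        Complex.I * (b * κ * h * G * ky : ℝ),
        Complex.I * (b * κ * h * G * kx : ℝ),
        ((h * (ρ * ω ^ 2 - κ * G * k ^ 2) : ℝ) : ℂ)] : Matrix (Fin 3) (Fin 3) ℂ)
      *ᵥ ![((-(kx / k) : ℝ) : ℂ), ((ky / k : ℝ) : ℂ), 0]
    = (((ρ * h ^ 3 / 12) * ω ^ 2 - D * (1 - ν) / 2 * k ^ 2
          - b ^ 2 * κ * h * G : ℝ) : ℂ)
        • ![((-(kx / k) : ℝ) : ℂ), ((ky / k : ℝ) : ℂ), 0] :=
  mindlin_reissner_tau3_eigenvector_general ρ h D ν κ G b ω kx ky k hkdef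
end

section
/- The determinant of the Mindlin–Reissner dispersion matrix factorizes: det B_b = h · f(k,ω) · A(k,ω), where f(k,ω) = (ρh³/12)ω² − D(1−ν)/2·k² − b²κhG and A(k,ω) = ((ρh³/12)ω² − Dk²)(ρω² − κGk²) − b²κGρh ω². -/
open Matrix Complex

/-- Factorized determinant of the Mindlin–Reissner dispersion matrix:
det B_b = h · f(k,ω) · A(k,ω). -/
theorem mindlin_reissner_det_factorized
    (ρ h D ν κ G b ω kx ky k : ℝ)
    (hk : 0 < kx ^ 2 + ky ^ 2) (hkdef : k = Real.sqrt (kx ^ 2 + ky ^ 2)) :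
    (!![(((ρ * h ^ 3 / 12) * ω ^ 2 - κ * h * G * b ^ 2
            - D * ((1 - ν) / 2 * kx ^ 2 + ky ^ 2) : ℝ) : ℂ),
        ((-(D * (1 + ν) / 2) * kx * ky : ℝ) : ℂ),
        -Complex.I * (b * κ * h * G * ky : ℝ);
        ((-(D * (1 + ν) / 2) * kx * ky : ℝ) : ℂ),
        (((ρ * h ^ 3 / 12) * ω ^ 2 - κ * h * G * b ^ 2
            - D * ((1 - ν) / 2 * ky ^ 2 + kx ^ 2) : ℝ) : ℂ),
        -Complex.I * (b * κ * h * G * kx : ℝ);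
        Complex.I * (b * κ * h * G * ky : ℝ),
        Complex.I * (b * κ * h * G * kx : ℝ),
        ((h * (ρ * ω ^ 2 - κ * G * k ^ 2) : ℝ) : ℂ)] : Matrix (Fin 3) (Fin 3) ℂ).det
    = ((h : ℂ))
      * (((ρ * h ^ 3 / 12) * ω ^ 2 - D * (1 - ν) / 2 * k ^ 2 - b ^ 2 * κ * h * G : ℝ) : ℂ)
      * ((((ρ * h ^ 3 / 12) * ω ^ 2 - D * k ^ 2) * (ρ * ω ^ 2 - κ * G * k ^ 2)
            - b ^ 2 * κ * G * ρ * h * ω ^ 2 : ℝ) : ℂ) := by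
  have hk2 : (k:ℂ) ^ 2 = (kx:ℂ) ^ 2 + (ky:ℂ) ^ 2 := by
    have : k ^ 2 = kx ^ 2 + ky ^ 2 := by
      rw [hkdef]; exact Real.sq_sqrt hk.le
    exact_mod_cast this
  simp [Matrix.det_fin_three]
  rw [hk2]
  ring_nf
  simp [Complex.I_sq]
  ring_nf
end
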